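/- Let m ≥ 3 and let P_2 □ F_m be the Cartesian product of the path P_2 with the fan graph F_m (a graph of order 2(m+1)). Then the harmonic centralization of P_2 □ F_m equals 4(m-1)(m-2)/(3m(2m+1)). -/

import Mathlib

open SimpleGraph Finset

/-- The harmonic centrality of a vertex `u` in a graph `G` of order `N`:
`(1/(N-1)) * Σ_{x ≠ u} 1/d(u,x)`, where `1/d(u,x) = 0` when there is no path
(Mathlib's `SimpleGraph.dist` is `0` for unreachable pairs, and `1/0 = 0` in `ℝ`). -/
noncomputable def harmonicCentrality {V : Type*} [Fintype V] [DecidableEq V]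
    (G : SimpleGraph V) (u : V) : ℝ :=
  (∑ x ∈ Finset.univ.erase u, (1 : ℝ) / (G.dist u x)) / ((Fintype.card V : ℝ) - 1)

/-- The harmonic centralization of a graph `G` of order `N`:
`(Σ_u (Hmax - H_G(u))) / ((N-2)/2)` where `Hmax` is the largest harmonic centrality. -/
noncomputable def harmonicCentralization {V : Type*} [Fintype V] [DecidableEq V]
    (G : SimpleGraph V) : ℝ :=
  (∑ u : V, ((⨆ v : V, harmonicCentrality G v) - harmonicCentrality G u)) /
    (((Fintype.card V : ℝ) - 2) / 2)

/-- The fan graph `F_m`: the join of a hub vertex (`none`) with the path `P_m`. -/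
def fanGraph (m : ℕ) : SimpleGraph (Option (Fin m)) :=
  SimpleGraph.fromRel (fun x y =>
    x = none ∨ ∃ a b : Fin m, x = some a ∧ y = some b ∧ (SimpleGraph.pathGraph m).Adj a b)

/-- The direct (tensor) product of two simple graphs. -/
def tensorProd {α β : Type*} (G : SimpleGraph α) (H : SimpleGraph β) :
    SimpleGraph (α × β) where
  Adj x y := G.Adj x.1 y.1 ∧ H.Adj x.2 y.2
  symm := ⟨fun x y h => ⟨h.1.symm, h.2.symm⟩⟩
  loopless := ⟨fun x h => G.irrefl h.1⟩

/-! ### Auxiliary lemmas -/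

lemma boxProd_dist_walk {α β : Type*} {G : SimpleGraph α} {H : SimpleGraph β}
    (hG : G.Connected) (hH : H.Connected) {x y : α × β} (w : (G.boxProd H).Walk x y) :
    G.dist x.1 y.1 + H.dist x.2 y.2 ≤ w.length := by
  induction w with
  | nil => simp
  | @cons x z y h w ih =>
    rw [SimpleGraph.Walk.length_cons]
    rcases h with ⟨h1, h2⟩ | ⟨h1, h2⟩
    · have t := hG.dist_triangle (u := x.1) (v := z.1) (w := y.1)
      rw [SimpleGraph.dist_eq_one_iff_adj.2 h1] at t
      rw [h2]
      omega
    · have t := hH.dist_triangle (u := x.2) (v := z.2) (w := y.2)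
      rw [SimpleGraph.dist_eq_one_iff_adj.2 h1] at t
      rw [h2]
      omega

lemma boxProd_dist {α β : Type*} {G : SimpleGraph α} {H : SimpleGraph β}
    (hG : G.Connected) (hH : H.Connected) (x y : α × β) :
    (G.boxProd H).dist x y = G.dist x.1 y.1 + H.dist x.2 y.2 := by
  refine le_antisymm ?_ ?_
  · obtain ⟨p, hp⟩ := hG.exists_walk_length_eq_dist x.1 y.1
    obtain ⟨q, hq⟩ := hH.exists_walk_length_eq_dist x.2 y.2
    have := SimpleGraph.dist_le ((p.boxProdLeft H x.2).append (q.boxProdRight G y.1))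
    have hl : ((p.boxProdLeft H x.2).append (q.boxProdRight G y.1)).length
        = G.dist x.1 y.1 + H.dist x.2 y.2 := by
      have e1 : (p.boxProdLeft H x.2).length = p.length := SimpleGraph.Walk.length_map _ p
      have e2 : (q.boxProdRight G y.1).length = q.length := SimpleGraph.Walk.length_map _ q
      rw [SimpleGraph.Walk.length_append, e1, e2, hp, hq]
    rw [hl] at this
    simpa using this
  · obtain ⟨w, hw⟩ := ((hG.boxProd hH).exists_walk_length_eq_dist x y)
    have := boxProd_dist_walk hG hH w
    omega

def adjpred {m : ℕ} (a b : Fin m) : Prop := a.val + 1 = b.val ∨ b.val + 1 = a.val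

instance {m : ℕ} (a b : Fin m) : Decidable (adjpred a b) := by unfold adjpred; infer_instance

def nbrs {m : ℕ} (a : Fin m) : ℕ := (univ.filter (fun b => adjpred a b)).card

def fdist (m : ℕ) : Option (Fin m) → Option (Fin m) → ℕ
  | none, none => 0
  | none, some _ => 1
  | some _, none => 1
  | some a, some b => if a = b then 0 else if adjpred a b then 1 else 2

lemma fan_adj_hub {m : ℕ} (a : Fin m) : (fanGraph m).Adj none (some a) := by
  rw [fanGraph, SimpleGraph.fromRel_adj]
  exact ⟨by simp, Or.inl (Or.inl rfl)⟩

lemma fan_adj_some {m : ℕ} (a b : Fin m) :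
    (fanGraph m).Adj (some a) (some b) ↔ adjpred a b := by
  rw [fanGraph, SimpleGraph.fromRel_adj]
  constructor
  · rintro ⟨hne, (h | h) | (h | h)⟩
    · simp at h
    · obtain ⟨a', b', ha, hb, hadj⟩ := h
      rw [Option.some_inj] at ha hb
      subst ha; subst hb
      rw [SimpleGraph.pathGraph_adj] at hadj
      exact hadj
    · simp at h
    · obtain ⟨a', b', ha, hb, hadj⟩ := h
      rw [Option.some_inj] at ha hb
      subst ha; subst hb
      rw [SimpleGraph.pathGraph_adj] at hadj
      exact hadj.symm
  · intro h
    refine ⟨?_, Or.inl (Or.inr ⟨a, b, rfl, rfl, SimpleGraph.pathGraph_adj.2 h⟩)⟩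
    rcases h with h | h <;> simp only [ne_eq, Option.some_inj, Fin.ext_iff] <;> omega

lemma fan_connected (m : ℕ) : (fanGraph m).Connected := by
  have hne : Nonempty (Option (Fin m)) := ⟨none⟩
  refine SimpleGraph.Connected.mk ?_
  have key : ∀ w : Option (Fin m), (fanGraph m).Reachable none w := by
    rintro (_ | a)
    · rfl
    · exact (fan_adj_hub a).reachable
  intro u v
  exact (key u).symm.trans (key v)

lemma fan_dist {m : ℕ} (u v : Option (Fin m)) : (fanGraph m).dist u v = fdist m u v := by
  match u, v with
  | none, none => simp [fdist]
  | none, some a => exact SimpleGraph.dist_eq_one_iff_adj.2 (fan_adj_hub a)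
  | some a, none =>
    rw [SimpleGraph.dist_comm]
    exact SimpleGraph.dist_eq_one_iff_adj.2 (fan_adj_hub a)
  | some a, some b =>
    rw [fdist]
    split
    · next h => subst h; simp
    · next hne =>
      split
      · next hadj => exact SimpleGraph.dist_eq_one_iff_adj.2 ((fan_adj_some a b).2 hadj)
      · next hnadj =>
        have hle : (fanGraph m).dist (some a) (some b) ≤ 2 := by
          have := SimpleGraph.dist_le (SimpleGraph.Walk.cons (fan_adj_hub a).symm
              (SimpleGraph.Walk.cons (fan_adj_hub b) SimpleGraph.Walk.nil))
          simpa using this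
        have h0 : (fanGraph m).dist (some a) (some b) ≠ 0 := by
          have := (fan_connected m).pos_dist_of_ne (u := some a) (v := some b) (by simpa using hne)
          omega
        have h1 : (fanGraph m).dist (some a) (some b) ≠ 1 := by
          intro h
          exact hnadj ((fan_adj_some a b).1 (SimpleGraph.dist_eq_one_iff_adj.1 h))
        omega

lemma path2_dist (i j : Fin 2) : (pathGraph 2).dist i j = if i = j then 0 else 1 := by
  split
  · next h => subst h; simp
  · next h =>
    refine SimpleGraph.dist_eq_one_iff_adj.2 ?_
    rw [SimpleGraph.pathGraph_two_eq_top]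
    exact h

lemma prod_dist {m : ℕ} (x y : Fin 2 × Option (Fin m)) :
    ((pathGraph 2).boxProd (fanGraph m)).dist x y
      = (if x.1 = y.1 then 0 else 1) + fdist m x.2 y.2 := by
  rw [boxProd_dist (SimpleGraph.pathGraph_connected 1) (fan_connected m), path2_dist, fan_dist]

lemma card_val_eq (m c : ℕ) : (univ.filter (fun b : Fin m => b.val = c)).card
    = if c < m then 1 else 0 := by
  split
  · next h =>
    rw [Finset.card_eq_one]
    refine ⟨⟨c, h⟩, ?_⟩
    ext b
    simp [Fin.ext_iff]
  · next h =>
    rw [Finset.card_eq_zero]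
    ext b
    simp only [mem_filter, mem_univ, true_and, Finset.notMem_empty, iff_false]
    omega

lemma nbrs_eq {m : ℕ} (a : Fin m) :
    nbrs a = (if a.val + 1 < m then 1 else 0) + (if 1 ≤ a.val then 1 else 0) := by
  rw [nbrs]
  have h0 : (univ.filter (fun b : Fin m => adjpred a b)) =
      (univ.filter (fun b : Fin m => b.val = a.val + 1)) ∪
      (univ.filter (fun b : Fin m => 1 ≤ a.val ∧ b.val = a.val - 1)) := by
    ext b
    simp only [mem_filter, mem_univ, true_and, Finset.mem_union]
    simp only [adjpred]
    omega
  have h2 : (univ.filter (fun b : Fin m => 1 ≤ a.val ∧ b.val = a.val - 1)).card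
      = if 1 ≤ a.val then 1 else 0 := by
    split
    · next h =>
      have : (univ.filter (fun b : Fin m => 1 ≤ a.val ∧ b.val = a.val - 1)) =
          (univ.filter (fun b : Fin m => b.val = a.val - 1)) := by
        ext b; simp [h]
      rw [this, card_val_eq, if_pos (by omega)]
    · next h =>
      rw [Finset.card_eq_zero]
      ext b
      simp only [mem_filter, mem_univ, true_and, Finset.notMem_empty, iff_false]
      omega
  have hdisj : Disjoint (univ.filter (fun b : Fin m => b.val = a.val + 1))
      (univ.filter (fun b : Fin m => 1 ≤ a.val ∧ b.val = a.val - 1)) := by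
    rw [Finset.disjoint_filter]
    intro b _ hb
    omega
  rw [h0, Finset.card_union_of_disjoint hdisj, card_val_eq, h2]

lemma nbrs_le_two {m : ℕ} (a : Fin m) : nbrs a ≤ 2 := by
  rw [nbrs_eq]; split <;> split <;> omega

lemma sum_nbrs {m : ℕ} : ∑ a : Fin m, nbrs a = 2 * (m - 1) := by
  rw [Finset.sum_congr rfl (fun a _ => nbrs_eq a), Finset.sum_add_distrib]
  have e1 : ∑ a : Fin m, (if a.val + 1 < m then 1 else 0) = m - 1 := by
    rw [Fin.sum_univ_eq_sum_range (fun i => if i + 1 < m then 1 else 0)]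
    rw [← Finset.card_filter]
    have : (range m).filter (fun i => i + 1 < m) = range (m - 1) := by
      ext i; simp only [mem_filter, Finset.mem_range]; omega
    simp [this]
  have e2 : ∑ a : Fin m, (if 1 ≤ a.val then 1 else 0) = m - 1 := by
    rw [Fin.sum_univ_eq_sum_range (fun i => if 1 ≤ i then 1 else 0)]
    rw [← Finset.card_filter]
    have : (range m).filter (fun i => 1 ≤ i) = Finset.Ico 1 m := by
      ext i; simp only [mem_filter, Finset.mem_range, Finset.mem_Ico]; omega
    simp [this]
  rw [e1, e2]; omega

lemma sum_ite_fin {m : ℕ} (a : Fin m) (c0 c1 c2 : ℝ) :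
    ∑ b : Fin m, (if a = b then c0 else if adjpred a b then c1 else c2)
    = c0 + (nbrs a : ℝ) * c1 + ((m : ℝ) - 1 - (nbrs a : ℝ)) * c2 := by
  have hpt : ∀ b : Fin m, (if a = b then c0 else if adjpred a b then c1 else c2)
      = (if a = b then c0 - c2 else 0) + (if adjpred a b then c1 - c2 else 0) + c2 := by
    intro b
    by_cases h : a = b
    · subst h
      have hna : ¬ adjpred a a := by unfold adjpred; omega
      simp [hna]
    · simp only [h, if_false]
      split <;> ring
  rw [Finset.sum_congr rfl (fun b _ => hpt b), Finset.sum_add_distrib, Finset.sum_add_distrib]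
  rw [Finset.sum_ite_eq, if_pos (Finset.mem_univ a)]
  rw [← Finset.sum_filter, Finset.sum_const, Finset.sum_const]
  rw [show (univ.filter (fun b : Fin m => adjpred a b)).card = nbrs a from rfl]
  simp only [Finset.card_univ, Fintype.card_fin, nsmul_eq_mul]
  ring

/-- The (unnormalized) harmonic sum value of a vertex of the product graph. -/
noncomputable def Tval (m : ℕ) : Option (Fin m) → ℝ
  | none => (3 * m + 2) / 2
  | some a => 5 / 3 + 5 * m / 6 + 2 * (nbrs a : ℝ) / 3

lemma inv_fdist_some {m : ℕ} (a b : Fin m) :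
    (1 : ℝ) / (fdist m (some a) (some b)) =
      if a = b then 0 else if adjpred a b then 1 else 1 / 2 := by
  rw [fdist]
  split <;> [skip; split] <;> norm_num

lemma inv_one_add_fdist_some {m : ℕ} (a b : Fin m) :
    (1 : ℝ) / (1 + (fdist m (some a) (some b) : ℝ)) =
      if a = b then 1 else if adjpred a b then 1 / 2 else 1 / 3 := by
  rw [fdist]
  split <;> [skip; split] <;> push_cast <;> norm_num

lemma harmonic_eq (m : ℕ) (x : Fin 2 × Option (Fin m)) :
    harmonicCentrality ((pathGraph 2).boxProd (fanGraph m)) x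
      = Tval m x.2 / (2 * (m : ℝ) + 1) := by
  obtain ⟨i, u⟩ := x
  rw [harmonicCentrality]
  have hzero : (1 : ℝ) / (((pathGraph 2).boxProd (fanGraph m)).dist (i, u) (i, u)) = 0 := by
    simp
  rw [Finset.sum_erase (s := univ)
    (f := fun x : Fin 2 × Option (Fin m) =>
      (1 : ℝ) / (((pathGraph 2).boxProd (fanGraph m)).dist (i, u) x)) hzero]
  have hcard : ((Fintype.card (Fin 2 × Option (Fin m)) : ℝ)) - 1 = 2 * (m : ℝ) + 1 := by
    simp only [Fintype.card_prod, Fintype.card_fin, Fintype.card_option]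
    push_cast
    ring
  rw [hcard]
  congr 1
  rw [Fintype.sum_prod_type]
  have hd : ∀ (j : Fin 2) (v : Option (Fin m)),
      (1 : ℝ) / (((pathGraph 2).boxProd (fanGraph m)).dist (i, u) (j, v))
        = (1 : ℝ) / (((if i = j then 0 else 1) + fdist m u v : ℕ)) := by
    intro j v
    rw [prod_dist]
  rw [Finset.sum_congr rfl (fun j _ => Finset.sum_congr rfl (fun v _ => hd j v))]
  rcases u with _ | a
  · fin_cases i
    · rw [Fin.sum_univ_two]
      norm_num
      simp only [fdist, Tval, Finset.sum_const, Finset.card_univ, Fintype.card_fin,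
        nsmul_eq_mul]
      push_cast
      norm_num
      ring
    · rw [Fin.sum_univ_two]
      norm_num
      simp only [fdist, Tval, Finset.sum_const, Finset.card_univ, Fintype.card_fin,
        nsmul_eq_mul]
      push_cast
      norm_num
      ring
  · have e0 : ∑ b : Fin m, ((fdist m (some a) (some b) : ℝ))⁻¹
        = (nbrs a : ℝ) + ((m : ℝ) - 1 - (nbrs a : ℝ)) * (1 / 2) := by
      rw [Finset.sum_congr rfl (fun b _ => by rw [← one_div, inv_fdist_some a b]), sum_ite_fin]
      ring
    have e1 : ∑ b : Fin m, (1 + (fdist m (some a) (some b) : ℝ))⁻¹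
        = 1 + (nbrs a : ℝ) * (1 / 2) + ((m : ℝ) - 1 - (nbrs a : ℝ)) * (1 / 3) := by
      rw [Finset.sum_congr rfl (fun b _ =>
        by rw [← one_div, inv_one_add_fdist_some a b]), sum_ite_fin]
    fin_cases i <;>
    · rw [Fin.sum_univ_two]
      norm_num
      rw [e0, e1]
      simp only [fdist, Tval]
      push_cast
      ring

lemma tval_le {m : ℕ} (hm : 3 ≤ m) (u : Option (Fin m)) : Tval m u ≤ Tval m none := by
  match u with
  | none => exact le_refl _
  | some a =>
    have h2 : (nbrs a : ℝ) ≤ 2 := by exact_mod_cast nbrs_le_two a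
    have hm' : (3 : ℝ) ≤ (m : ℝ) := by exact_mod_cast hm
    simp only [Tval]
    linarith

/-- Theorem 3.6: harmonic centralization of `P₂ □ Fₘ`. -/
theorem harmonicCentralization_boxProd_path_fan (m : ℕ) (hm : 3 ≤ m) :
    harmonicCentralization ((SimpleGraph.pathGraph 2).boxProd (fanGraph m)) =
      4 * ((m : ℝ) - 1) * ((m : ℝ) - 2) / (3 * (m : ℝ) * (2 * (m : ℝ) + 1)) := by
  have hm' : (3 : ℝ) ≤ (m : ℝ) := by exact_mod_cast hm
  have hpos : (0 : ℝ) < 2 * (m : ℝ) + 1 := by linarith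
  have hsup : (⨆ v, harmonicCentrality ((pathGraph 2).boxProd (fanGraph m)) v)
      = Tval m none / (2 * (m : ℝ) + 1) := by
    apply le_antisymm
    · apply ciSup_le
      intro x
      rw [harmonic_eq]
      exact div_le_div_of_nonneg_right (tval_le hm x.2) hpos.le
    · have hb : BddAbove (Set.range fun v : Fin 2 × Option (Fin m) =>
          harmonicCentrality ((pathGraph 2).boxProd (fanGraph m)) v) :=
        Set.Finite.bddAbove (Set.finite_range _)
      have h := le_ciSup hb ((0 : Fin 2), (none : Option (Fin m)))
      rwa [harmonic_eq] at h
  have hSa : ∑ a : Fin m, (nbrs a : ℝ) = 2 * (m : ℝ) - 2 := by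
    have h := sum_nbrs (m := m)
    have h1 : 1 ≤ m := by omega
    calc ∑ a : Fin m, ((nbrs a : ℕ) : ℝ) = ((∑ a : Fin m, nbrs a : ℕ) : ℝ) := by
          rw [Nat.cast_sum]
      _ = ((2 * (m - 1) : ℕ) : ℝ) := by rw [h]
      _ = 2 * (m : ℝ) - 2 := by
          push_cast [Nat.cast_sub h1]
          ring
  have harm : ∀ a : Fin m, Tval m none - Tval m (some a)
      = ((3 * (m : ℝ) + 2) / 2 - 5 / 3 - 5 * (m : ℝ) / 6) - (2 / 3) * (nbrs a : ℝ) := by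
    intro a
    simp only [Tval]
    ring
  have hs' : ∑ u : Option (Fin m), (Tval m none - Tval m u)
      = (m : ℝ) * ((3 * (m : ℝ) + 2) / 2 - 5 / 3 - 5 * (m : ℝ) / 6)
        - (2 / 3) * (2 * (m : ℝ) - 2) := by
    rw [Fintype.sum_option, sub_self, zero_add]
    rw [Finset.sum_congr rfl (fun a _ => harm a)]
    rw [Finset.sum_sub_distrib, Finset.sum_const, Finset.card_univ, Fintype.card_fin,
      ← Finset.mul_sum, hSa]
    simp only [nsmul_eq_mul]
  have hterm : ∀ x : Fin 2 × Option (Fin m),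
      (⨆ v, harmonicCentrality ((pathGraph 2).boxProd (fanGraph m)) v)
        - harmonicCentrality ((pathGraph 2).boxProd (fanGraph m)) x
      = (Tval m none - Tval m x.2) / (2 * (m : ℝ) + 1) := by
    intro x
    rw [hsup, harmonic_eq, div_sub_div_same]
  rw [harmonicCentralization]
  rw [Finset.sum_congr rfl (fun x _ => hterm x), Fintype.sum_prod_type, Fin.sum_univ_two]
  simp only [← Finset.sum_div]
  rw [hs']
  have hcard : ((Fintype.card (Fin 2 × Option (Fin m)) : ℝ)) = 2 * (m : ℝ) + 2 := by
    simp only [Fintype.card_prod, Fintype.card_fin, Fintype.card_option]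
    push_cast
    ring
  rw [hcard]
  have hm0 : (m : ℝ) ≠ 0 := by linarith
  have hne : 2 * (m : ℝ) + 1 ≠ 0 := by linarith
  field_simp
  rw [add_sub_cancel_right, div_eq_iff hm0]
  ring
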